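/- arXiv:1402.6539 — 2 statements merged into one kernel-verified Lean document; each statement's English description precedes it below -/
import Mathlib

section
/- For every natural number n ≥ 1 and every real x ≥ 1, the n-th Legendre polynomial satisfies P_n'(x)/P_n(x) ≤ n²(2n+1)/((n+1)x + (2n²-1)√(x²-1)), and moreover the right-hand side does not exceed 2n²/(x + (2n-1)√(x²-1)). -/
/-!
Let `R_n = dⁿ/dxⁿ (x² - 1)ⁿ`. Computing `R_{n+1}` once as `dⁿ` of the derivative
`2(n+1) x (x² - 1)ⁿ` and once by Leibniz's rule applied to `(x² - 1) (x² - 1)ⁿ` gives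
`R_{n+1} = 2(x² - 1) R_n' + 2(n+1) x R_n`, and similarly `R_{n+1}' = 2(n+1)(x R_n' + (n+1) R_n)`.
For `P_n` these become `(x² - 1) P_n' = n (x P_n - P_{n-1})` and Bonnet's recurrence, from which
`P_n ≥ 1` on `[1, ∞)`.

With `s = √(x² - 1)` and `D_n = (n+1) x + (2n² - 1) s`, the first bound is, for `x > 1`, the
lower bound `D_n P_{n-1} ≥ (x D_n - n(2n+1)(x² - 1)) P_n`. It passes from `n` to `n + 1` through
Bonnet's recurrence because, modulo `s² = x² - 1`, the defect of the induction step is `s²`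
times a sum of nonnegative terms. At `x = 1` one uses `P_n'(1) = n(n+1)/2`, and the second bound is
equivalent to `s ≤ x`.
-/

/-- The `n`-th Legendre polynomial, via Rodrigues' formula
`P_n(x) = (1/(2^n n!)) dⁿ/dxⁿ (x²-1)ⁿ`. -/
noncomputable def legendreP (n : ℕ) : ℝ → ℝ := fun x =>
  (1 / (2 ^ n * (n.factorial : ℝ))) * iteratedDeriv n (fun y => (y ^ 2 - 1) ^ n) x

open Polynomial

section Rodrigues

variable {R : Type*} [CommRing R]

noncomputable def rodriguesPoly (n : ℕ) : R[X] := derivative^[n] ((X ^ 2 - 1) ^ n)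

theorem rodriguesPoly_zero : (rodriguesPoly 0 : R[X]) = 1 := by
  simp [rodriguesPoly]

theorem derivative_X_sq_sub_one_pow_succ (n : ℕ) :
    derivative ((X ^ 2 - 1 : R[X]) ^ (n + 1)) = (2 * (n + 1)) • ((X ^ 2 - 1) ^ n * X) := by
  rw [derivative_pow, derivative_sub, derivative_X_pow, derivative_one, nsmul_eq_mul]
  simp only [Nat.add_sub_cancel, C_eq_natCast]
  push_cast
  ring

theorem rodriguesPoly_succ (n : ℕ) :
    (rodriguesPoly (n + 1) : R[X]) =
      2 * (X ^ 2 - 1) * derivative (rodriguesPoly n) +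
        2 * ((n : R[X]) + 1) * X * rodriguesPoly n := by
  set g : R[X] := (X ^ 2 - 1) ^ n
  have hD : derivative^[n] (g * X) = rodriguesPoly n * X + n • derivative^[n - 1] g :=
    iterate_derivative_mul_X g
  have hD' : derivative^[n + 1] (g * X) =
      derivative (rodriguesPoly n) * X + (n + 1) • rodriguesPoly n := by
    rw [iterate_derivative_mul_X, Nat.add_sub_cancel, Function.iterate_succ_apply']
    rfl
  have hA : rodriguesPoly (n + 1) = (2 * (n + 1)) • derivative^[n] (g * X) := by
    rw [rodriguesPoly, Function.iterate_succ_apply, derivative_X_sq_sub_one_pow_succ,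
      iterate_derivative_smul]
  have hB : rodriguesPoly (n + 1) = derivative^[n + 1] (g * X) * X +
      (n + 1) • derivative^[n] (g * X) - derivative (rodriguesPoly n) := by
    rw [rodriguesPoly, show (X ^ 2 - 1 : R[X]) ^ (n + 1) = g * X * X - g by ring,
      iterate_derivative_sub, iterate_derivative_mul_X, Nat.add_sub_cancel,
      Function.iterate_succ_apply' _ n g]
    rfl
  rw [hD] at hA
  rw [hD, hD'] at hB
  simp only [nsmul_eq_mul] at hA hB
  push_cast at hA hB
  -- the unknown `derivative^[n - 1] g` cancels
  linear_combination 2 * hB - hA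

theorem derivative_rodriguesPoly_succ (n : ℕ) :
    derivative (rodriguesPoly (n + 1) : R[X]) =
      2 * ((n : R[X]) + 1) *
        (X * derivative (rodriguesPoly n) + ((n : R[X]) + 1) * rodriguesPoly n) := by
  rw [rodriguesPoly, ← Function.iterate_succ_apply' derivative, Function.iterate_succ_apply,
    derivative_X_sq_sub_one_pow_succ, iterate_derivative_smul, iterate_derivative_mul_X,
    Nat.add_sub_cancel, Function.iterate_succ_apply']
  simp only [nsmul_eq_mul, rodriguesPoly]
  push_cast
  ring

theorem eval_one_rodriguesPoly (n : ℕ) :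
    (rodriguesPoly n : R[X]).eval 1 = 2 ^ n * n.factorial := by
  induction n with
  | zero => simp [rodriguesPoly_zero]
  | succ n ih =>
    rw [rodriguesPoly_succ]
    simp only [eval_add, eval_mul, eval_sub, eval_pow, eval_X, eval_one, eval_natCast, eval_ofNat,
      ih, Nat.factorial_succ]
    push_cast
    ring

end Rodrigues

theorem Polynomial.iteratedDeriv_eval {𝕜 : Type*} [NontriviallyNormedField 𝕜] (p : 𝕜[X])
    (k : ℕ) :
    iteratedDeriv k (fun x => p.eval x) = fun x => (derivative^[k] p).eval x := by
  induction k generalizing p with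
  | zero => rfl
  | succ k ih =>
    rw [iteratedDeriv_succ', show deriv (fun x => p.eval x) = fun x => (derivative p).eval x from
      _root_.funext fun x => p.deriv, ih, Function.iterate_succ_apply]

theorem legendreP_apply (n : ℕ) (x : ℝ) :
    legendreP n x = (rodriguesPoly n).eval x / (2 ^ n * n.factorial) := by
  have h : (fun y : ℝ => (y ^ 2 - 1) ^ n) = fun y => ((X ^ 2 - 1) ^ n : ℝ[X]).eval y := by
    simp
  rw [legendreP, h, iteratedDeriv_eval, rodriguesPoly]
  ring

theorem deriv_legendreP (n : ℕ) (x : ℝ) :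
    deriv (legendreP n) x = (derivative (rodriguesPoly n)).eval x / (2 ^ n * n.factorial) := by
  rw [funext (legendreP_apply n)]
  exact ((rodriguesPoly n).hasDerivAt x).div_const _ |>.deriv

theorem legendreP_zero (x : ℝ) : legendreP 0 x = 1 := by
  simp [legendreP_apply, rodriguesPoly_zero]

theorem deriv_legendreP_zero (x : ℝ) : deriv (legendreP 0) x = 0 := by
  simp [deriv_legendreP, rodriguesPoly_zero]

theorem succ_mul_legendreP_succ (n : ℕ) (x : ℝ) :
    (n + 1) * legendreP (n + 1) x =
      (x ^ 2 - 1) * deriv (legendreP n) x + (n + 1) * x * legendreP n x := by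
  rw [legendreP_apply, legendreP_apply, deriv_legendreP, rodriguesPoly_succ]
  simp only [eval_add, eval_mul, eval_sub, eval_pow, eval_X, eval_one, eval_natCast, eval_ofNat,
    pow_succ, Nat.factorial_succ]
  push_cast
  field_simp

theorem deriv_legendreP_succ (n : ℕ) (x : ℝ) :
    deriv (legendreP (n + 1)) x = x * deriv (legendreP n) x + (n + 1) * legendreP n x := by
  rw [deriv_legendreP, deriv_legendreP, legendreP_apply, derivative_rodriguesPoly_succ]
  simp only [eval_add, eval_mul, eval_X, eval_natCast, eval_ofNat, eval_one,
    pow_succ, Nat.factorial_succ]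
  push_cast
  field_simp

theorem legendreP_one (x : ℝ) : legendreP 1 x = x := by
  simpa [legendreP_zero, deriv_legendreP_zero] using succ_mul_legendreP_succ 0 x

theorem sq_sub_one_mul_deriv_legendreP_succ (n : ℕ) (x : ℝ) :
    (x ^ 2 - 1) * deriv (legendreP (n + 1)) x =
      (n + 1) * (x * legendreP (n + 1) x - legendreP n x) := by
  rw [deriv_legendreP_succ]
  linear_combination -x * succ_mul_legendreP_succ n x

theorem legendreP_bonnet (n : ℕ) (x : ℝ) :
    (n + 2) * legendreP (n + 2) x =
      (2 * n + 3) * x * legendreP (n + 1) x - (n + 1) * legendreP n x := by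
  have h := succ_mul_legendreP_succ (n + 1) x
  push_cast at h
  linear_combination h + sq_sub_one_mul_deriv_legendreP_succ n x

theorem legendreP_apply_one (n : ℕ) : legendreP n 1 = 1 := by
  rw [legendreP_apply, eval_one_rodriguesPoly]
  field_simp

theorem deriv_legendreP_apply_one (n : ℕ) : deriv (legendreP n) 1 = n * (n + 1) / 2 := by
  induction n with
  | zero => simp [deriv_legendreP_zero]
  | succ n ih =>
    rw [deriv_legendreP_succ, ih, legendreP_apply_one]
    push_cast
    ring

theorem one_le_legendreP_and_le_succ {x : ℝ} (hx : 1 ≤ x) (n : ℕ) :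
    1 ≤ legendreP n x ∧ legendreP n x ≤ legendreP (n + 1) x := by
  induction n with
  | zero => simpa [legendreP_zero, legendreP_one] using hx
  | succ n ih =>
    obtain ⟨h₁, h₂⟩ := ih
    refine ⟨h₁.trans h₂, ?_⟩
    have h₃ : 0 ≤ (2 * n + 3) * ((x - 1) * legendreP (n + 1) x) := by
      have := h₁.trans h₂
      positivity
    nlinarith [legendreP_bonnet n x]

theorem one_le_legendreP {x : ℝ} (hx : 1 ≤ x) (n : ℕ) : 1 ≤ legendreP n x :=
  (one_le_legendreP_and_le_succ hx n).1

section RatioBound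

variable {v x s : ℝ}

def boundDen (v x s : ℝ) : ℝ := (v + 1) * x + (2 * v ^ 2 - 1) * s

def boundNum (v x s : ℝ) : ℝ := x * boundDen v x s - v * (2 * v + 1) * (x ^ 2 - 1)

theorem boundDen_pos (hv : 0 ≤ v) (hs : 0 ≤ s) (hsx : s < x) : 0 < boundDen v x s := by
  unfold boundDen
  nlinarith [mul_nonneg hv (hs.trans hsx.le), mul_nonneg (sq_nonneg v) hs]

theorem boundNum_nonneg (hv : 1 ≤ v) (hs : 0 ≤ s) (hsx : s ≤ x) (hs2 : s ^ 2 = x ^ 2 - 1) :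
    0 ≤ boundNum v x s := by
  have hxs : x * (x - s) ≤ 1 := by nlinarith [mul_le_mul_of_nonneg_left hsx hs]
  unfold boundNum boundDen
  nlinarith [mul_le_mul_of_nonneg_left hxs (by nlinarith : (0 : ℝ) ≤ 2 * v ^ 2 - 1)]

theorem boundNum_succ_mul_le (hv : 0 ≤ v) (hs2 : s ^ 2 = x ^ 2 - 1) :
    boundNum (v + 1) x s * ((2 * v + 1) * x * boundDen v x s - v * boundNum v x s) ≤
      (v + 1) * boundDen (v + 1) x s * boundDen v x s := by
  have key : 2 * ((v + 1) * boundDen (v + 1) x s * boundDen v x s -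
      boundNum (v + 1) x s * ((2 * v + 1) * x * boundDen v x s - v * boundNum v x s)) =
      s ^ 2 * ((3 * v + 2) * (2 * (v + 1) ^ 2 - 1) * (x - s) ^ 2 + (2 * v + 1) * v) := by
    unfold boundNum boundDen
    linear_combination (-(3 * v + 2) * (2 * (v + 1) ^ 2 - 1) * (x - s) ^ 2
      - v * (2 * v + 1) * (2 * v * (v + 1) * (2 * v + 3) * (x ^ 2 - 1) + x ^ 2)) * hs2
  have : 0 ≤ s ^ 2 * ((3 * v + 2) * (2 * (v + 1) ^ 2 - 1) * (x - s) ^ 2 + (2 * v + 1) * v) := by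
    have : 0 ≤ 2 * (v + 1) ^ 2 - 1 := by nlinarith
    positivity
  linarith

theorem boundNum_succ_mul_le_of_recurrence {P₀ P₁ P₂ : ℝ} (hv : 0 ≤ v) (hx : 1 ≤ x)
    (hs : 0 ≤ s) (hs2 : s ^ 2 = x ^ 2 - 1) (hP₁ : 0 ≤ P₁)
    (hrec : (v + 1) * P₂ = (2 * v + 1) * x * P₁ - v * P₀)
    (hprev : boundNum v x s * P₁ ≤ boundDen v x s * P₀) :
    boundNum (v + 1) x s * P₂ ≤ boundDen (v + 1) x s * P₁ := by
  have hsx : s < x := by nlinarith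
  have hD := boundDen_pos hv hs hsx
  have hA := boundNum_nonneg (by linarith : 1 ≤ v + 1) hs hsx.le hs2
  refine le_of_mul_le_mul_left ?_ (mul_pos (by linarith : 0 < v + 1) hD)
  calc (v + 1) * boundDen v x s * (boundNum (v + 1) x s * P₂)
      = boundNum (v + 1) x s *
          ((2 * v + 1) * x * boundDen v x s * P₁ - v * (boundDen v x s * P₀)) := by
        linear_combination boundNum (v + 1) x s * boundDen v x s * hrec
    _ ≤ boundNum (v + 1) x s *
          ((2 * v + 1) * x * boundDen v x s - v * boundNum v x s) * P₁ := by
        nlinarith [mul_le_mul_of_nonneg_left hprev (mul_nonneg hA hv)]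
    _ ≤ (v + 1) * boundDen (v + 1) x s * boundDen v x s * P₁ :=
        mul_le_mul_of_nonneg_right (boundNum_succ_mul_le hv hs2) hP₁
    _ = (v + 1) * boundDen v x s * (boundDen (v + 1) x s * P₁) := by ring

theorem div_boundDen_le (hv : 0 ≤ v) (hs : 0 ≤ s) (hsx : s < x) :
    v ^ 2 * (2 * v + 1) / boundDen v x s ≤ 2 * v ^ 2 / (x + (2 * v - 1) * s) := by
  rw [div_le_div_iff₀ (boundDen_pos hv hs hsx) (by nlinarith)]
  unfold boundDen
  nlinarith [mul_nonneg (sq_nonneg v) (sub_nonneg.2 hsx.le)]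

end RatioBound

theorem boundNum_mul_legendreP_succ_le {x s : ℝ} (hx : 1 ≤ x) (hs : 0 ≤ s)
    (hs2 : s ^ 2 = x ^ 2 - 1) (m : ℕ) :
    boundNum (m + 1) x s * legendreP (m + 1) x ≤ boundDen (m + 1) x s * legendreP m x := by
  induction m with
  | zero =>
    have hsx : s ≤ x := by nlinarith
    simp only [CharP.cast_eq_zero, zero_add, legendreP_zero, legendreP_one, boundNum, boundDen]
    nlinarith [mul_nonneg (by nlinarith : 0 ≤ x ^ 2 - 1) (sub_nonneg.2 hsx)]
  | succ m ih =>
    push_cast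
    exact boundNum_succ_mul_le_of_recurrence (by positivity) hx hs hs2
      (by linarith [one_le_legendreP hx (m + 1)]) (by linear_combination legendreP_bonnet m x) ih

theorem deriv_legendreP_mul_boundDen_le {x s : ℝ} (hx : 1 ≤ x) (hs : 0 ≤ s)
    (hs2 : s ^ 2 = x ^ 2 - 1) (n : ℕ) :
    deriv (legendreP n) x * boundDen n x s ≤ n ^ 2 * (2 * n + 1) * legendreP n x := by
  cases n with
  | zero => simp [deriv_legendreP_zero]
  | succ m =>
    rcases hx.eq_or_lt with rfl | hx₁
    · obtain rfl : s = 0 := by nlinarith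
      rw [deriv_legendreP_apply_one, legendreP_apply_one, boundDen]
      push_cast
      nlinarith [sq_nonneg (m : ℝ)]
    · refine le_of_mul_le_mul_left ?_ (by nlinarith : 0 < x ^ 2 - 1)
      have h := boundNum_mul_legendreP_succ_le hx hs hs2 m
      unfold boundNum at h
      push_cast
      linear_combination
        (↑m + 1) * h + boundDen (↑m + 1) x s * sq_sub_one_mul_deriv_legendreP_succ m x

theorem legendre_ratio_stronger_upper_bound_general (n : ℕ) (x : ℝ) (hx : 1 ≤ x) :
    deriv (legendreP n) x / legendreP n x ≤
      (n : ℝ) ^ 2 * (2 * (n : ℝ) + 1) /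
        (((n : ℝ) + 1) * x + (2 * (n : ℝ) ^ 2 - 1) * Real.sqrt (x ^ 2 - 1)) ∧
    (n : ℝ) ^ 2 * (2 * (n : ℝ) + 1) /
        (((n : ℝ) + 1) * x + (2 * (n : ℝ) ^ 2 - 1) * Real.sqrt (x ^ 2 - 1)) ≤
      2 * (n : ℝ) ^ 2 / (x + (2 * (n : ℝ) - 1) * Real.sqrt (x ^ 2 - 1)) := by
  have hs := Real.sqrt_nonneg (x ^ 2 - 1)
  have hs2 : √(x ^ 2 - 1) ^ 2 = x ^ 2 - 1 := Real.sq_sqrt (by nlinarith)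
  have hsx : √(x ^ 2 - 1) < x := by nlinarith
  refine ⟨?_, div_boundDen_le n.cast_nonneg hs hsx⟩
  exact (div_le_div_iff₀ (by linarith [one_le_legendreP hx n])
    (boundDen_pos n.cast_nonneg hs hsx)).2 (deriv_legendreP_mul_boundDen_le hx hs hs2 n)

theorem legendre_ratio_stronger_upper_bound (n : ℕ) (hn : 1 ≤ n) (x : ℝ) (hx : 1 ≤ x) :
    deriv (legendreP n) x / legendreP n x ≤
      (n : ℝ) ^ 2 * (2 * (n : ℝ) + 1) /
        (((n : ℝ) + 1) * x + (2 * (n : ℝ) ^ 2 - 1) * Real.sqrt (x ^ 2 - 1)) ∧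
    (n : ℝ) ^ 2 * (2 * (n : ℝ) + 1) /
        (((n : ℝ) + 1) * x + (2 * (n : ℝ) ^ 2 - 1) * Real.sqrt (x ^ 2 - 1)) ≤
      2 * (n : ℝ) ^ 2 / (x + (2 * (n : ℝ) - 1) * Real.sqrt (x ^ 2 - 1)) :=
  legendre_ratio_stronger_upper_bound_general n x hx
end

section
/- Let n ∈ ℕ, n ≥ 1, and λ ≥ 1. Then for every real x ≥ 1, u_n(x) = (P_n^{(λ)})'(x)/P_n^{(λ)}(x) ≤ n²/(x + (n-1)√(x²-1)). -/
/-- Chebyshev polynomials of the first kind (as real functions):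
`T_0 = 1`, `T_1 = x`, `T_{n+2}(x) = 2x T_{n+1}(x) - T_n(x)`. -/
noncomputable def chebT : ℕ → ℝ → ℝ
  | 0 => fun _ => 1
  | 1 => fun x => x
  | n + 2 => fun x => 2 * x * chebT (n + 1) x - chebT n x

/-- The ultraspherical (Gegenbauer) polynomials for `lam ≠ 0`, via
`P_0 = 1`, `P_1 = 2λx`, `(n+1)P_{n+1}(x) = 2(n+λ)x P_n(x) - (n+2λ-1)P_{n-1}(x)`. -/
noncomputable def gegenRec (lam : ℝ) : ℕ → ℝ → ℝ
  | 0 => fun _ => 1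
  | 1 => fun x => 2 * lam * x
  | n + 2 => fun x =>
      (2 * ((n : ℝ) + 1 + lam) * x * gegenRec lam (n + 1) x -
        ((n : ℝ) + 2 * lam) * gegenRec lam n x) / ((n : ℝ) + 2)

/-- The `n`-th ultraspherical polynomial `P_n^{(λ)}`; for `λ = 0` it is taken to be the
Chebyshev polynomial of the first kind `T_n`. -/
noncomputable def ultra (lam : ℝ) (n : ℕ) : ℝ → ℝ :=
  if lam = 0 then chebT n else gegenRec lam n

/-- The ratio `u_n(x) = (P_n^{(λ)})'(x) / P_n^{(λ)}(x)`. -/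
noncomputable def uRatio (lam : ℝ) (n : ℕ) (x : ℝ) : ℝ :=
  deriv (ultra lam n) x / ultra lam n x

/-!
Write `P_n = gegenRec λ n` and `s = √(x² - 1)`. Through the three-term recurrence, the ratio bound
`(n+1)(x+(n+1)s) P_{n+1} ≤ (n+2λ)(x+s)(x+ns) P_n` propagates by induction: the inductive step is a
polynomial inequality in `x` and `s` which, modulo `x² = s² + 1`, has only nonnegative terms
when `λ ≥ 1`. The differential recurrence `(x²-1) P'_{n+1} = (n+1) x P_{n+1} - (n+2λ) P_n` turns
this into the bound on `P'_{n+1}/P_{n+1}`. At `x = 1` the differential recurrence degenerates,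
and there `(2λ+1) P'_n(1) = n(n+2λ) P_n(1)` instead.
-/

noncomputable def gegenRecDeriv (lam : ℝ) : ℕ → ℝ → ℝ
  | 0 => fun _ => 0
  | 1 => fun _ => 2 * lam
  | n + 2 => fun x =>
      (2 * ((n : ℝ) + 1 + lam) * (gegenRec lam (n + 1) x + x * gegenRecDeriv lam (n + 1) x) -
        ((n : ℝ) + 2 * lam) * gegenRecDeriv lam n x) / ((n : ℝ) + 2)

section

variable (lam : ℝ)

theorem gegenRec_add_two (n : ℕ) (x : ℝ) :
    ((n : ℝ) + 2) * gegenRec lam (n + 2) x =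
      2 * ((n : ℝ) + 1 + lam) * x * gegenRec lam (n + 1) x -
        ((n : ℝ) + 2 * lam) * gegenRec lam n x := by
  rw [gegenRec, mul_div_cancel₀ _ (by positivity)]

theorem gegenRecDeriv_add_two (n : ℕ) (x : ℝ) :
    ((n : ℝ) + 2) * gegenRecDeriv lam (n + 2) x =
      2 * ((n : ℝ) + 1 + lam) * (gegenRec lam (n + 1) x + x * gegenRecDeriv lam (n + 1) x) -
        ((n : ℝ) + 2 * lam) * gegenRecDeriv lam n x := by
  rw [gegenRecDeriv, mul_div_cancel₀ _ (by positivity)]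

theorem hasDerivAt_gegenRec (n : ℕ) (x : ℝ) :
    HasDerivAt (gegenRec lam n) (gegenRecDeriv lam n x) x := by
  induction n using Nat.twoStepInduction generalizing x with
  | zero => exact hasDerivAt_const x 1
  | one => simpa [gegenRec, gegenRecDeriv] using (hasDerivAt_id x).const_mul (2 * lam)
  | more n ih₀ ih₁ =>
    refine (((((hasDerivAt_id' x).const_mul (2 * ((n : ℝ) + 1 + lam))).fun_mul (ih₁ x)).fun_sub
      ((ih₀ x).const_mul ((n : ℝ) + 2 * lam))).div_const ((n : ℝ) + 2)).congr_deriv ?_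
    rw [gegenRecDeriv]
    ring

theorem gegenRec_pos {x : ℝ} (hlam : 1 / 2 ≤ lam) (hx : 1 ≤ x) (n : ℕ) :
    0 < gegenRec lam n x := by
  suffices h : ∀ n, 0 < gegenRec lam n x ∧ gegenRec lam n x ≤ gegenRec lam (n + 1) x from (h n).1
  intro n
  induction n with
  | zero => exact ⟨one_pos, by simp only [gegenRec]; nlinarith⟩
  | succ n ih =>
    obtain ⟨hpos, hle⟩ := ih
    have hpos' := hpos.trans_le hle
    refine ⟨hpos', le_of_mul_le_mul_left ?_ (by positivity : (0 : ℝ) < n + 2)⟩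
    have hrec := gegenRec_add_two lam n x
    have hxP : gegenRec lam (n + 1) x ≤ x * gegenRec lam (n + 1) x :=
      le_mul_of_one_le_left hpos'.le hx
    nlinarith [mul_le_mul_of_nonneg_left hxP (by positivity : (0 : ℝ) ≤ 2 * (n + 1 + lam)),
      mul_le_mul_of_nonneg_left hle (by linarith : (0 : ℝ) ≤ n + 2 * lam)]

theorem sq_sub_one_mul_gegenRecDeriv_succ (n : ℕ) (x : ℝ) :
    (x ^ 2 - 1) * gegenRecDeriv lam (n + 1) x =
      ((n : ℝ) + 1) * x * gegenRec lam (n + 1) x - ((n : ℝ) + 2 * lam) * gegenRec lam n x := by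
  induction n using Nat.twoStepInduction with
  | zero => simp only [gegenRec, gegenRecDeriv]; push_cast; ring
  | one => simp only [gegenRec, gegenRecDeriv]; push_cast; field_simp; ring
  | more m ih₀ ih₁ =>
    have hD := gegenRecDeriv_add_two lam (m + 1) x
    have hP₁ := gegenRec_add_two lam (m + 1) x
    have hP₀ := gegenRec_add_two lam m x
    push_cast at hD hP₁ ih₁ ⊢
    apply mul_left_cancel₀ (by positivity : (m : ℝ) + 3 ≠ 0)
    linear_combination (x ^ 2 - 1) * hD + (2 * ((m : ℝ) + 2 + lam) * x) * ih₁ -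
      ((m : ℝ) + 1 + 2 * lam) * ih₀ - ((m : ℝ) + 3) * x * hP₁ + ((m : ℝ) + 1 + 2 * lam) * hP₀

theorem gegenRec_succ_one (n : ℕ) :
    ((n : ℝ) + 1) * gegenRec lam (n + 1) 1 = ((n : ℝ) + 2 * lam) * gegenRec lam n 1 := by
  linear_combination -(sq_sub_one_mul_gegenRecDeriv_succ lam n 1)

theorem gegenRecDeriv_one (n : ℕ) :
    (2 * lam + 1) * gegenRecDeriv lam n 1 = n * ((n : ℝ) + 2 * lam) * gegenRec lam n 1 := by
  induction n using Nat.twoStepInduction with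
  | zero => simp [gegenRecDeriv]
  | one => simp only [gegenRecDeriv, gegenRec]; push_cast; ring
  | more m ih₀ ih₁ =>
    have hD := gegenRecDeriv_add_two lam m 1
    have hr₀ := gegenRec_succ_one lam m
    have hr₁ := gegenRec_succ_one lam (m + 1)
    push_cast at ih₁ hr₁ ⊢
    apply mul_left_cancel₀ (by positivity : (m : ℝ) + 2 ≠ 0)
    linear_combination (2 * lam + 1) * hD + 2 * ((m : ℝ) + 1 + lam) * ih₁ -
      ((m : ℝ) + 2 * lam) * ih₀ + (m * ((m : ℝ) + 2 * lam)) * hr₀ -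
      (((m : ℝ) + 2) * ((m : ℝ) + 2 + 2 * lam)) * hr₁

theorem gegenRecDeriv_one_le (hlam : 1 / 2 ≤ lam) (n : ℕ) :
    gegenRecDeriv lam n 1 ≤ n ^ 2 * gegenRec lam n 1 := by
  have hP := gegenRec_pos lam hlam le_rfl n
  have hn : (0 : ℝ) ≤ n * (n - 1) := by
    rcases n.eq_zero_or_pos with rfl | hn
    · simp
    · exact mul_nonneg n.cast_nonneg (sub_nonneg.2 (by exact_mod_cast hn))
  refine le_of_mul_le_mul_left ?_ (by linarith : 0 < 2 * lam + 1)
  linear_combination gegenRecDeriv_one lam n +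
    mul_nonneg (mul_nonneg hn (by linarith : (0 : ℝ) ≤ 2 * lam)) hP.le

theorem gegenRec_succ_mul_le {x s : ℝ} (hlam : 1 ≤ lam) (hx : 1 ≤ x) (hs : 0 ≤ s)
    (hxs : x ^ 2 = s ^ 2 + 1) (n : ℕ) :
    ((n : ℝ) + 1) * (x + ((n : ℝ) + 1) * s) * gegenRec lam (n + 1) x ≤
      ((n : ℝ) + 2 * lam) * ((x + s) * (x + n * s)) * gegenRec lam n x := by
  induction n with
  | zero => simp only [gegenRec]; push_cast; linear_combination
  | succ n ih =>
    have step : 2 * ((n : ℝ) + 1 + lam) * x * ((x + s) * (x + n * s)) * (x + ((n : ℝ) + 2) * s) ≤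
        ((n : ℝ) + 1) * (x + ((n : ℝ) + 1) * s) * (x + ((n : ℝ) + 2) * s) +
          ((n : ℝ) + 1 + 2 * lam) * ((x + s) * (x + ((n : ℝ) + 1) * s)) *
            ((x + s) * (x + n * s)) := by
      linear_combination (((n : ℝ) + 1) ^ 2 * s ^ 2 + ((n : ℝ) + 1) ^ 3 * s ^ 2 -
          2 * lam * ((n : ℝ) + 1) * s ^ 2 + ((n : ℝ) + 1) * x * s +
          2 * ((n : ℝ) + 1) ^ 2 * x * s + ((n : ℝ) + 1) * x ^ 2) * hxs +
        (by positivity : (0 : ℝ) ≤ 2 * lam * ((n : ℝ) + 1) * s ^ 2) +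
        (by positivity : (0 : ℝ) ≤ 2 * (lam - 1) * ((n : ℝ) + 1) ^ 2 * s ^ 4) +
        (by positivity : (0 : ℝ) ≤ 2 * (lam - 1) * ((n : ℝ) + 1) ^ 2 * x * s ^ 3)
    have hA : 0 < (x + s) * (x + n * s) := by positivity
    have hP := gegenRec_pos lam (by linarith) hx (n + 1)
    push_cast
    refine le_of_mul_le_mul_left ?_ hA
    have hC : 0 ≤ x + ((n : ℝ) + 2) * s := by positivity
    linear_combination (x + s) * (x + n * s) * (x + ((n : ℝ) + 2) * s) * gegenRec_add_two lam n x +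
      mul_le_mul_of_nonneg_left ih hC + mul_le_mul_of_nonneg_right step hP.le

theorem gegenRecDeriv_succ_mul_le {x s : ℝ} (hlam : 1 ≤ lam) (hx : 1 ≤ x) (hs : 0 < s)
    (hxs : x ^ 2 = s ^ 2 + 1) (n : ℕ) :
    (x + n * s) * gegenRecDeriv lam (n + 1) x ≤ ((n : ℝ) + 1) ^ 2 * gegenRec lam (n + 1) x := by
  refine le_of_mul_le_mul_left ?_ (by positivity : 0 < s ^ 2 * (x + s))
  calc s ^ 2 * (x + s) * ((x + n * s) * gegenRecDeriv lam (n + 1) x)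
      = (x + s) * (x + n * s) *
          (((n : ℝ) + 1) * x * gegenRec lam (n + 1) x -
            ((n : ℝ) + 2 * lam) * gegenRec lam n x) := by
        rw [← sq_sub_one_mul_gegenRecDeriv_succ, hxs]; ring
    _ ≤ (x + s) * (x + n * s) * (((n : ℝ) + 1) * x * gegenRec lam (n + 1) x) -
          ((n : ℝ) + 1) * (x + ((n : ℝ) + 1) * s) * gegenRec lam (n + 1) x := by
        linear_combination gegenRec_succ_mul_le lam hlam hx hs.le hxs n
    _ = s ^ 2 * (x + s) * (((n : ℝ) + 1) ^ 2 * gegenRec lam (n + 1) x) := by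
        linear_combination ((n : ℝ) + 1) * (x + ((n : ℝ) + 1) * s) * gegenRec lam (n + 1) x * hxs

end

theorem ultra_ratio_upper_bound_lambda_ge_one (n : ℕ) (hn : 1 ≤ n) (lam : ℝ) (hlam : 1 ≤ lam)
    (x : ℝ) (hx : 1 ≤ x) :
    uRatio lam n x ≤ (n : ℝ) ^ 2 / (x + ((n : ℝ) - 1) * Real.sqrt (x ^ 2 - 1)) := by
  have hultra : ultra lam n = gegenRec lam n := if_neg (zero_lt_one.trans_le hlam).ne'
  have hP := gegenRec_pos lam (by linarith) hx n
  rw [uRatio, hultra, (hasDerivAt_gegenRec lam n x).deriv]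
  obtain ⟨k, rfl⟩ := Nat.exists_eq_add_of_le' hn
  push_cast
  rw [add_sub_cancel_right,
    div_le_div_iff₀ hP (add_pos_of_pos_of_nonneg (by linarith) (by positivity))]
  rcases hx.eq_or_lt with rfl | hx₁
  · simpa using gegenRecDeriv_one_le lam (by linarith) (k + 1)
  set s := √(x ^ 2 - 1)
  have hs : 0 < s := Real.sqrt_pos.2 (by nlinarith)
  have hxs : x ^ 2 = s ^ 2 + 1 := by rw [Real.sq_sqrt (by nlinarith)]; ring
  simpa [mul_comm] using gegenRecDeriv_succ_mul_le lam hlam hx hs hxs k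
end
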